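/- Let G = 𝔽₂ⁿ and A ⊆ G nonempty of density α with A+A+A+A ≠ G. Then there exists a nonzero γ ∈ Ĝ with |χ̂_A(γ)| ≥ α^(3/2). -/

import Mathlib

open Finset Pointwise

/-- The Fourier transform of the indicator of `A ⊆ 𝔽₂ⁿ` at the character `γ`. -/
noncomputable def dft (n : ℕ) (A : Finset (Fin n → ZMod 2)) (γ : Fin n → ZMod 2) : ℝ :=
  (2 ^ n : ℝ)⁻¹ * ∑ x ∈ A, (-1 : ℝ) ^ ((∑ i, γ i * x i).val)

/-!
Write `S(γ) = ∑_{x ∈ A} (-1)^{γ·x}`. If `t ∉ A+A+A+A`, then `∑_γ S(γ)⁴ (-1)^{γ·t} = 0`: expanding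
the fourth power, the sum over `γ` counts the solutions of `a+b+c+d = t` in `A`, of which there
are none. Isolating `γ = 0`, where `χ̂_A(0) = α`, gives
`α⁴ ≤ ∑_{γ≠0} χ̂_A(γ)⁴ ≤ max_{γ≠0} χ̂_A(γ)² · ∑_γ χ̂_A(γ)² = max_{γ≠0} χ̂_A(γ)² · α`
by Parseval, so `α³ ≤ χ̂_A(γ)²` for some `γ ≠ 0`.
-/

lemma AddChar.map_sum_eq_prod {ι A M : Type*} [AddCommMonoid A] [CommMonoid M] (ψ : AddChar A M)
    (s : Finset ι) (f : ι → A) : ψ (∑ i ∈ s, f i) = ∏ i ∈ s, ψ (f i) := by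
  induction s using Finset.cons_induction with
  | empty => simp
  | cons a s ha ih => rw [sum_cons, prod_cons, AddChar.map_add_eq_mul, ih]

lemma ZMod.neg_one_pow_val_ne_one {a : ZMod 2} (ha : a ≠ 0) : (-1 : ℝ) ^ a.val ≠ 1 := by
  obtain rfl : a = 1 := by revert a; decide
  rw [ZMod.val_one]
  norm_num

lemma CharTwo.pi_add_eq_zero {ι R : Type*} [Ring R] [CharP R 2] {x y : ι → R} :
    x + y = 0 ↔ x = y := by
  simp only [funext_iff, Pi.add_apply, Pi.zero_apply, CharTwo.add_eq_zero]

section walshChar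

variable {ι : Type*} [Fintype ι]

noncomputable def walshChar (γ : ι → ZMod 2) : AddChar (ι → ZMod 2) ℝ :=
  (AddChar.zmodChar 2 (by norm_num : (-1 : ℝ) ^ 2 = 1)).compAddMonoidHom
    (AddMonoidHom.mk' (dotProduct γ) (dotProduct_add γ))

lemma walshChar_apply (γ x : ι → ZMod 2) : walshChar γ x = (-1 : ℝ) ^ (γ ⬝ᵥ x).val := rfl

lemma walshChar_comm (γ x : ι → ZMod 2) : walshChar γ x = walshChar x γ := by
  rw [walshChar_apply, walshChar_apply, dotProduct_comm]

lemma abs_walshChar (γ x : ι → ZMod 2) : |walshChar γ x| = 1 := by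
  simp [walshChar_apply]

@[simp] lemma walshChar_zero_left (x : ι → ZMod 2) : walshChar 0 x = 1 := by
  simp [walshChar_apply]

lemma walshChar_eq_zero_iff [DecidableEq ι] {x : ι → ZMod 2} : walshChar x = 0 ↔ x = 0 := by
  refine ⟨fun hx => ?_, fun hx => by ext γ; simp [hx]⟩
  by_contra! hne
  obtain ⟨i, hi⟩ := Function.ne_iff.mp hne
  have := DFunLike.congr_fun hx (Pi.single i 1)
  rw [walshChar_apply, dotProduct_single, mul_one] at this
  exact ZMod.neg_one_pow_val_ne_one hi this

lemma sum_walshChar_apply [DecidableEq ι] (x : ι → ZMod 2) :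
    ∑ γ, walshChar γ x = if x = 0 then (2 : ℝ) ^ Fintype.card ι else 0 := by
  simp_rw [walshChar_comm _ x, AddChar.sum_eq_ite, walshChar_eq_zero_iff]
  simp

lemma sum_sq_sum_walshChar [DecidableEq ι] (A : Finset (ι → ZMod 2)) :
    ∑ γ, (∑ x ∈ A, walshChar γ x) ^ 2 = 2 ^ Fintype.card ι * #A := by
  calc ∑ γ, (∑ x ∈ A, walshChar γ x) ^ 2
      = ∑ x ∈ A, ∑ y ∈ A, ∑ γ, walshChar γ (x + y) := by
        simp_rw [sq, sum_mul_sum, AddChar.map_add_eq_mul]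
        rw [sum_comm]
        exact sum_congr rfl fun x _ => sum_comm
    _ = ∑ x ∈ A, ∑ y ∈ A, if x = y then (2 : ℝ) ^ Fintype.card ι else 0 := by
        simp_rw [sum_walshChar_apply, CharTwo.pi_add_eq_zero]
    _ = 2 ^ Fintype.card ι * #A := by
        simp [mul_comm]

lemma sum_pow_sum_walshChar_mul_walshChar_eq_zero [DecidableEq ι] (A : Finset (ι → ZMod 2)) {k : ℕ}
    {t : ι → ZMod 2} (ht : t ∉ k • A) :
    ∑ γ, (∑ x ∈ A, walshChar γ x) ^ k * walshChar γ t = 0 := by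
  calc ∑ γ, (∑ x ∈ A, walshChar γ x) ^ k * walshChar γ t
      = ∑ p ∈ Fintype.piFinset fun _ : Fin k => A, ∑ γ, walshChar γ (∑ i, p i + t) := by
        simp_rw [sum_pow', sum_mul, AddChar.map_add_eq_mul, AddChar.map_sum_eq_prod]
        exact sum_comm
    _ = 0 := by
        refine sum_eq_zero fun p hp => ?_
        rw [sum_walshChar_apply, if_neg]
        intro hpt
        rw [CharTwo.pi_add_eq_zero] at hpt
        apply ht
        rw [← mem_coe, coe_nsmul, Set.mem_nsmul_iff_sum, ← hpt]
        exact ⟨p, Fintype.mem_piFinset.mp hp, rfl⟩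

end walshChar

lemma exists_mem_sum_pow_four_le_mul_sum_sq {ι : Type*} {s : Finset ι} (hs : s.Nonempty)
    (f : ι → ℝ) : ∃ i ∈ s, ∑ j ∈ s, f j ^ 4 ≤ f i ^ 2 * ∑ j ∈ s, f j ^ 2 := by
  obtain ⟨i, hi, hmax⟩ := s.exists_max_image (fun j => f j ^ 2) hs
  refine ⟨i, hi, ?_⟩
  rw [mul_sum]
  refine sum_le_sum fun j hj => ?_
  rw [show f j ^ 4 = f j ^ 2 * f j ^ 2 by ring]
  exact mul_le_mul_of_nonneg_right (hmax j hj) (sq_nonneg _)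

section dft

variable {n : ℕ} (A : Finset (Fin n → ZMod 2))

lemma dft_eq_sum_walshChar (γ : Fin n → ZMod 2) :
    dft n A γ = (2 ^ n : ℝ)⁻¹ * ∑ x ∈ A, walshChar γ x := rfl

lemma dft_zero : dft n A 0 = #A / 2 ^ n := by
  simp [dft_eq_sum_walshChar, div_eq_inv_mul]

lemma sum_dft_sq : ∑ γ, dft n A γ ^ 2 = #A / 2 ^ n := by
  simp_rw [dft_eq_sum_walshChar, mul_pow, ← mul_sum, sum_sq_sum_walshChar, Fintype.card_fin]
  field_simp

lemma dft_zero_pow_le_sum_abs_pow {k : ℕ} {t : Fin n → ZMod 2} (ht : t ∉ k • A) :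
    dft n A 0 ^ k ≤ ∑ γ ∈ univ.erase 0, |dft n A γ| ^ k := by
  have hvanish : ∑ γ, dft n A γ ^ k * walshChar γ t = 0 := by
    simp_rw [dft_eq_sum_walshChar, mul_pow, mul_assoc, ← mul_sum,
      sum_pow_sum_walshChar_mul_walshChar_eq_zero A ht, mul_zero]
  rw [← add_sum_erase _ _ (mem_univ 0), walshChar_zero_left, mul_one] at hvanish
  calc dft n A 0 ^ k = -∑ γ ∈ univ.erase 0, dft n A γ ^ k * walshChar γ t := by linarith
    _ ≤ ∑ γ ∈ univ.erase 0, |dft n A γ ^ k * walshChar γ t| :=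
        (neg_le_abs _).trans (abs_sum_le_sum_abs _ _)
    _ = ∑ γ ∈ univ.erase 0, |dft n A γ| ^ k := by
        simp_rw [abs_mul, abs_walshChar, mul_one, abs_pow]

end dft

/-- If `A+A+A+A` is not all of `𝔽₂ⁿ` then `A` has a nontrivial Fourier coefficient of size
at least `α^{3/2}`. -/
theorem large_coefficient_of_fourfold_sumset_ne_univ
    (n : ℕ) (A : Finset (Fin n → ZMod 2)) (hA : A.Nonempty)
    (h : A + A + A + A ≠ Finset.univ) :
    ∃ γ : Fin n → ZMod 2, γ ≠ 0 ∧
      ((A.card : ℝ) / 2 ^ n) ^ ((3 : ℝ) / 2) ≤ |dft n A γ| := by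
  obtain ⟨t, ht⟩ : ∃ t, t ∉ 4 • A := by
    simpa [succ_nsmul, eq_univ_iff_forall] using h
  set α : ℝ := #A / 2 ^ n
  have hα : 0 < α := by have := hA.card_pos; positivity
  have h4 : α ^ 4 ≤ ∑ γ ∈ univ.erase 0, dft n A γ ^ 4 := by
    simpa only [dft_zero, Even.pow_abs (by decide : Even 4)] using
      dft_zero_pow_le_sum_abs_pow A ht
  have hne : (univ.erase (0 : Fin n → ZMod 2)).Nonempty := by
    by_contra! hempty
    rw [hempty, sum_empty] at h4
    exact (pow_pos hα 4).not_ge h4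
  obtain ⟨γ, hγ, hmax⟩ := exists_mem_sum_pow_four_le_mul_sum_sq hne (dft n A)
  have h2 : ∑ γ ∈ univ.erase 0, dft n A γ ^ 2 ≤ α :=
    (sum_le_univ_sum_of_nonneg fun _ => sq_nonneg _).trans (sum_dft_sq A).le
  have h3 : α ^ 3 ≤ dft n A γ ^ 2 := by
    refine le_of_mul_le_mul_right ?_ hα
    calc α ^ 3 * α = α ^ 4 := by ring
      _ ≤ dft n A γ ^ 2 * ∑ γ ∈ univ.erase 0, dft n A γ ^ 2 := h4.trans hmax
      _ ≤ dft n A γ ^ 2 * α := mul_le_mul_of_nonneg_left h2 (sq_nonneg _)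
  refine ⟨γ, ne_of_mem_erase hγ, ?_⟩
  calc α ^ ((3 : ℝ) / 2) = √(α ^ 3) := by
        rw [Real.sqrt_eq_rpow, ← Real.rpow_natCast, ← Real.rpow_mul hα.le]
        norm_num
    _ ≤ √(dft n A γ ^ 2) := Real.sqrt_le_sqrt h3
    _ = |dft n A γ| := Real.sqrt_sq_eq_abs _
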